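/- Let Γ be a layered graph with unique minimal vertex * and every vertex of V^+ having an outgoing edge. Give FV^+ the grading with V_i in degree i, and let T(V^+)_i be the induced filtration on T(V^+). Then for all i ≥ 0, T(V^+)_i = θ(T(E)_i), where T(E) carries the filtration induced by giving an edge e degree |t(e)| and θ: T(E) → T(V^+) is the algebra homomorphism induced by e ↦ t(e) − h(e) (with * ↦ 0). -/

import Mathlib

noncomputable section

/-- A layered directed graph: vertices come with a rank (layer), and each
edge goes from a vertex of rank `j+1` to a vertex of rank `j`. -/
structure LayeredGraph where
  V : Type
  E : Type
  rank : V → ℕ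
  tail : E → V
  head : E → V
  rank_tail : ∀ e, rank (tail e) = rank (head e) + 1

namespace LayeredGraph

variable (G : LayeredGraph)

/-- `V₀ = {*}`: there is a unique vertex of rank `0`. -/
def HasUniqueMin : Prop := ∃ s : G.V, G.rank s = 0 ∧ ∀ v, G.rank v = 0 → v = s

/-- Every vertex of `V⁺` has at least one outgoing edge. -/
def EdgeFull : Prop := ∀ v, G.rank v ≠ 0 → ∃ e, G.tail e = v

/-- `u` covers `w`: there is an edge from `u` to `w`. -/
def adj (u w : G.V) : Prop := ∃ e, G.tail e = u ∧ G.head e = w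

/-- `v ≥ u` with a prescribed rank drop `j` (this is `u ∈ S_j(v)`;
for `j = 0` it forces `u = v`). -/
def SRel (v u : G.V) (j : ℕ) : Prop :=
  Relation.ReflTransGen G.adj v u ∧ G.rank u + j = G.rank v

/-- A uniform layered graph: for each vertex `v` of rank `≥ 2`, all elements of
`S₁(v)` are equivalent under the equivalence relation generated by
`u ∼ w ↔ S₁(u) ∩ S₁(w) ≠ ∅`. -/
def Uniform : Prop := ∀ v u w, 2 ≤ G.rank v → G.adj v u → G.adj v w →
  Relation.EqvGen (fun a b => G.adj v a ∧ G.adj v b ∧ ∃ x, G.adj a x ∧ G.adj b x) u w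

/-- A (nonempty) directed path: a nonempty list of composable edges. -/
def IsPathList (l : List G.E) : Prop :=
  l ≠ [] ∧ l.Chain' (fun e f => G.head e = G.tail f)

/-- The tail (initial vertex) of a path, as an `Option`. -/
def firstV (l : List G.E) : Option G.V := l.head?.map G.tail

/-- The head (final vertex) of a path, as an `Option`. -/
def lastV (l : List G.E) : Option G.V := l.getLast?.map G.head

/-- The list `v₀, v₁, …, v_m` of vertices visited by a path. -/
def pathVerts (l : List G.E) : List G.V :=
  match l with
  | [] => []
  | e :: _ => G.tail e :: l.map G.head

/-- The type `V⁺` of vertices of positive rank. -/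
def Vp := {v : G.V // G.rank v ≠ 0}

variable (F : Type) [Field F]

/-- The coefficient `e(π,k)` of `t^k` in `P_π(t) = (1 - te₁)⋯(1 - te_m)`,
an element of the tensor algebra `T(E)` (modelled as the free algebra on `E`). -/
def ecoef (π : List G.E) (k : ℕ) : FreeAlgebra F G.E :=
  ((-1 : F) ^ k) • ((π.sublistsLen k).map fun l => (l.map (FreeAlgebra.ι F)).prod).sum

/-- The two-sided ideal generated by a set, as a submodule. -/
def twoSidedSpan {A : Type} [Ring A] [Algebra F A] (S : Set A) : Submodule F A :=
  Submodule.span F {x | ∃ a s b, s ∈ S ∧ x = a * s * b}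

/-- The defining ideal `R` of `A(Γ)`, generated by the differences
`e(π₁,k) - e(π₂,k)` over pairs of paths with the same tail and the same head. -/
def Rideal : Submodule F (FreeAlgebra F G.E) :=
  twoSidedSpan F {x | ∃ π₁ π₂ k, G.IsPathList π₁ ∧ G.IsPathList π₂ ∧
    G.firstV π₁ = G.firstV π₂ ∧ G.lastV π₁ = G.lastV π₂ ∧
    1 ≤ k ∧ k ≤ π₁.length ∧ x = G.ecoef F π₁ k - G.ecoef F π₂ k}

/-- A vertex viewed in `T(V⁺)` (the free algebra on `V⁺`), with `*` sent to `0`. -/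
def vert (v : G.V) : FreeAlgebra F G.Vp :=
  if h : G.rank v = 0 then 0 else FreeAlgebra.ι F (⟨v, h⟩ : G.Vp)

/-- The algebra homomorphism `θ : T(E) → T(V⁺)`, induced by `e ↦ t(e) - h(e)`. -/
def theta : FreeAlgebra F G.E →ₐ[F] FreeAlgebra F G.Vp :=
  FreeAlgebra.lift F fun e => G.vert F (G.tail e) - G.vert F (G.head e)

/-- The filtration `T(E)_i` of `T(E)`, where an edge `e` has degree `|t(e)|`. -/
def filtE (i : ℕ) : Submodule F (FreeAlgebra F G.E) :=
  Submodule.span F {x | ∃ l : List G.E, (l.map fun e => G.rank (G.tail e)).sum ≤ i ∧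
    x = (l.map (FreeAlgebra.ι F)).prod}

/-- The homogeneous component `T(V⁺)_[i]` of `T(V⁺)`,
where a vertex has degree equal to its rank. -/
def homogV (i : ℕ) : Submodule F (FreeAlgebra F G.Vp) :=
  Submodule.span F {x | ∃ l : List G.Vp, (l.map fun p => G.rank p.1).sum = i ∧
    x = (l.map (FreeAlgebra.ι F)).prod}

/-- The filtration `T(V⁺)_i` of `T(V⁺)` induced by the vertex grading. -/
def filtV (i : ℕ) : Submodule F (FreeAlgebra F G.Vp) :=
  Submodule.span F {x | ∃ l : List G.Vp, (l.map fun p => G.rank p.1).sum ≤ i ∧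
    x = (l.map (FreeAlgebra.ι F)).prod}

/-- The associated graded ideal `gr I` of an ideal `I ⊆ T(V⁺)`: its degree-`k`
component is `T(V⁺)_[k] ∩ (T(V⁺)_{k-1} + I)`. -/
def grIdeal (I : Submodule F (FreeAlgebra F G.Vp)) : Submodule F (FreeAlgebra F G.Vp) :=
  ⨆ k, G.homogV F k ⊓ ((⨆ j, ⨆ _ : j < k, G.homogV F j) ⊔ I)

/-- The monomial `v(π,k) = v₀v₁⋯v_{k-1} ∈ T(V⁺)` attached to a path `π`. -/
def vmon (π : List G.E) (k : ℕ) : FreeAlgebra F G.Vp :=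
  (((G.pathVerts π).take k).map (G.vert F)).prod

/-- The ideal `R_gr ⊆ T(V⁺)`, generated by the differences `v(π₁,k) - v(π₂,k)`
over pairs of paths with common tail. -/
def Rgr : Submodule F (FreeAlgebra F G.Vp) :=
  twoSidedSpan F {x | ∃ π₁ π₂ k, G.IsPathList π₁ ∧ G.IsPathList π₂ ∧
    G.firstV π₁ = G.firstV π₂ ∧ 2 ≤ k ∧ k ≤ π₁.length ∧ k ≤ π₂.length ∧
    x = G.vmon F π₁ k - G.vmon F π₂ k}

/-- The degree-one subspace `V = F·V⁺ ⊆ T(V⁺)`. -/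
def Wone : Submodule F (FreeAlgebra F G.Vp) :=
  Submodule.span F (Set.range (FreeAlgebra.ι F))

/-- The quadratic relation space `R` of `gr A(Γ)`,
spanned by the elements `v(u - w)` with `u, w ∈ S₁(v)`. -/
def Rquad : Submodule F (FreeAlgebra F G.Vp) :=
  Submodule.span F {x | ∃ v u w, G.adj v u ∧ G.adj v w ∧
    x = G.vert F v * (G.vert F u - G.vert F w)}

/-- `S_j(v) = span{u : v > u, |u| = |v| - j}` (with `S₀(v) = span{v}`). -/
def Sspan (j : ℕ) (v : G.V) : Submodule F (FreeAlgebra F G.Vp) :=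
  Submodule.span F {x | ∃ u, G.SRel v u j ∧ x = G.vert F u}

/-- `P_j(v) = span{u - w : v > u, v > w, |u| = |w| = |v| - j}`. -/
def Pspan (j : ℕ) (v : G.V) : Submodule F (FreeAlgebra F G.Vp) :=
  Submodule.span F {x | ∃ u w, G.SRel v u j ∧ G.SRel v w j ∧
    x = G.vert F u - G.vert F w}

end LayeredGraph

/-- The elements of the sublattice generated by a family of subspaces. -/
inductive latGen {α : Type*} [Lattice α] (S : Set α) : α → Prop
  | base {x} : x ∈ S → latGen S x
  | inf {x y} : latGen S x → latGen S y → latGen S (x ⊓ y)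
  | sup {x y} : latGen S x → latGen S y → latGen S (x ⊔ y)

/-- A family of elements of a lattice is distributive if the sublattice
it generates is distributive. -/
def IsDistribFamily {α : Type*} [Lattice α] (S : Set α) : Prop :=
  ∀ x y z, latGen S x → latGen S y → latGen S z → x ⊓ (y ⊔ z) = (x ⊓ y) ⊔ (x ⊓ z)

/-- Backelin's criterion: a quadratic algebra `T(V)/(R)` (given by the degree-one
subspace `V` and the relation space `R ⊆ V⊗V` inside the tensor algebra) is Koszul
iff for each `k` the collection of subspaces `V^i R V^(k-i)` generates a
distributive lattice. -/
def IsKoszulQuad (F : Type) [Field F] {A : Type} [Ring A] [Algebra F A]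
    (W R : Submodule F A) : Prop :=
  ∀ k : ℕ, IsDistribFamily {X | ∃ i ≤ k, X = W ^ i * R * W ^ (k - i)}

end

noncomputable section Aux

namespace LayeredGraphAux

variable (G : LayeredGraph) (F : Type) [Field F]

lemma filtE_mono {i j : ℕ} (h : i ≤ j) : G.filtE F i ≤ G.filtE F j := by
  apply Submodule.span_mono
  rintro x ⟨l, hl, rfl⟩
  exact ⟨l, hl.trans h, rfl⟩

lemma filtV_mono {i j : ℕ} (h : i ≤ j) : G.filtV F i ≤ G.filtV F j := by
  apply Submodule.span_mono
  rintro x ⟨l, hl, rfl⟩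
  exact ⟨l, hl.trans h, rfl⟩

lemma filtV_mul_mem {a b : ℕ} {x y : FreeAlgebra F G.Vp}
    (hx : x ∈ G.filtV F a) (hy : y ∈ G.filtV F b) :
    x * y ∈ G.filtV F (a + b) := by
  have h : G.filtV F a * G.filtV F b ≤ G.filtV F (a + b) := by
    rw [LayeredGraph.filtV, LayeredGraph.filtV, Submodule.span_mul_span]
    refine Submodule.span_le.2 ?_
    rintro z hz
    rw [Set.mem_mul] at hz
    obtain ⟨u, ⟨l1, h1, rfl⟩, v, ⟨l2, h2, rfl⟩, rfl⟩ := hz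
    refine Submodule.subset_span ⟨l1 ++ l2, ?_, ?_⟩
    · simp only [List.map_append, List.sum_append]; omega
    · simp [List.map_append, List.prod_append]
  exact h (Submodule.mul_mem_mul hx hy)

lemma filtE_mul_mem {a b : ℕ} {x y : FreeAlgebra F G.E}
    (hx : x ∈ G.filtE F a) (hy : y ∈ G.filtE F b) :
    x * y ∈ G.filtE F (a + b) := by
  have h : G.filtE F a * G.filtE F b ≤ G.filtE F (a + b) := by
    rw [LayeredGraph.filtE, LayeredGraph.filtE, Submodule.span_mul_span]
    refine Submodule.span_le.2 ?_
    rintro z hz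
    rw [Set.mem_mul] at hz
    obtain ⟨u, ⟨l1, h1, rfl⟩, v, ⟨l2, h2, rfl⟩, rfl⟩ := hz
    refine Submodule.subset_span ⟨l1 ++ l2, ?_, ?_⟩
    · simp only [List.map_append, List.sum_append]; omega
    · simp [List.map_append, List.prod_append]
  exact h (Submodule.mul_mem_mul hx hy)

lemma vert_mem_filtV {v : G.V} {n : ℕ} (h : G.rank v ≤ n) :
    G.vert F v ∈ G.filtV F n := by
  by_cases h0 : G.rank v = 0
  · rw [LayeredGraph.vert, dif_pos h0]; exact zero_mem _
  · rw [LayeredGraph.vert, dif_neg h0]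
    refine Submodule.subset_span ⟨[(⟨v, h0⟩ : G.Vp)], ?_, ?_⟩
    · show G.rank v + 0 ≤ n
      simpa using h
    · show _ = FreeAlgebra.ι F (⟨v, h0⟩ : G.Vp) * 1
      exact (mul_one _).symm

lemma prodDiff_mem (l : List G.E) :
    (l.map fun e => G.vert F (G.tail e) - G.vert F (G.head e)).prod ∈
      G.filtV F ((l.map fun e => G.rank (G.tail e)).sum) := by
  induction l with
  | nil => exact Submodule.subset_span ⟨[], by simp, by simp⟩
  | cons e l ih =>
      simp only [List.map_cons, List.prod_cons, List.sum_cons]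
      refine filtV_mul_mem G F ?_ ih
      refine sub_mem (vert_mem_filtV G F le_rfl) (vert_mem_filtV G F ?_)
      have := G.rank_tail e; omega

lemma vert_mem_map (hfull : G.EdgeFull) :
    ∀ n (v : G.V), G.rank v ≤ n →
      G.vert F v ∈ Submodule.map (G.theta F).toLinearMap (G.filtE F n) := by
  intro n
  induction n with
  | zero =>
      intro v hv
      have h0 : G.rank v = 0 := Nat.le_zero.mp hv
      rw [LayeredGraph.vert, dif_pos h0]
      exact zero_mem _
  | succ n ih =>
      intro v hv
      by_cases h0 : G.rank v = 0
      · rw [LayeredGraph.vert, dif_pos h0]; exact zero_mem _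
      · obtain ⟨e, he⟩ := hfull v h0
        have hhead : G.rank (G.head e) ≤ n := by
          have := G.rank_tail e; rw [he] at this; omega
        have h1 : G.theta F (FreeAlgebra.ι F e) =
            G.vert F v - G.vert F (G.head e) := by
          rw [LayeredGraph.theta, FreeAlgebra.lift_ι_apply, he]
        have h2 : G.vert F v = G.theta F (FreeAlgebra.ι F e) + G.vert F (G.head e) := by
          rw [h1, sub_add_cancel]
        rw [h2]
        refine add_mem ⟨FreeAlgebra.ι F e, ?_, rfl⟩
          (Submodule.map_mono (filtE_mono G F (Nat.le_succ n)) (ih (G.head e) hhead))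
        exact Submodule.subset_span ⟨[e], by simpa [he] using hv, by simp⟩

lemma map_filtE_mul {a b : ℕ} {x y : FreeAlgebra F G.Vp}
    (hx : x ∈ Submodule.map (G.theta F).toLinearMap (G.filtE F a))
    (hy : y ∈ Submodule.map (G.theta F).toLinearMap (G.filtE F b)) :
    x * y ∈ Submodule.map (G.theta F).toLinearMap (G.filtE F (a + b)) := by
  obtain ⟨u, hu, rfl⟩ := hx
  obtain ⟨w, hw, rfl⟩ := hy
  exact ⟨u * w, filtE_mul_mem G F hu hw, by simp [map_mul]⟩

end LayeredGraphAux

end Aux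

open LayeredGraphAux in
/-- Lemma 2.2: for all `i ≥ 0`, the filtration on `T(V⁺)` induced by
the vertex grading agrees with the image under `θ` of the filtration on `T(E)`
in which an edge `e` has degree `|t(e)|`: `T(V⁺)_i = θ(T(E)_i)`. -/
theorem filtV_eq_map_filtE (G : LayeredGraph) (F : Type) [Field F]
    (hmin : G.HasUniqueMin) (hfull : G.EdgeFull) (i : ℕ) :
    G.filtV F i = Submodule.map (G.theta F).toLinearMap (G.filtE F i) := by
  apply le_antisymm
  · rw [LayeredGraph.filtV]
    refine Submodule.span_le.2 ?_
    rintro x ⟨l, hl, rfl⟩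
    have key : ∀ l : List G.Vp, (l.map (FreeAlgebra.ι F)).prod ∈
        Submodule.map (G.theta F).toLinearMap
          (G.filtE F ((l.map fun p => G.rank p.1).sum)) := by
      intro l
      induction l with
      | nil => exact ⟨1, Submodule.subset_span ⟨[], by simp, by simp⟩, by simp⟩
      | cons p l ih =>
          simp only [List.map_cons, List.prod_cons, List.sum_cons]
          refine map_filtE_mul G F ?_ ih
          have hp : FreeAlgebra.ι F p = G.vert F p.1 := by
            rw [LayeredGraph.vert, dif_neg p.2]
            rfl
          rw [hp]
          exact vert_mem_map G F hfull _ _ le_rfl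
    exact Submodule.map_mono (filtE_mono G F hl) (key l)
  · rw [Submodule.map_le_iff_le_comap, LayeredGraph.filtE]
    refine Submodule.span_le.2 ?_
    rintro x ⟨l, hl, rfl⟩
    simp only [Submodule.mem_comap, AlgHom.toLinearMap_apply, SetLike.mem_coe]
    rw [map_list_prod]
    have h : (l.map (FreeAlgebra.ι F)).map (G.theta F) =
        l.map fun e => G.vert F (G.tail e) - G.vert F (G.head e) := by
      simp [List.map_map, Function.comp, LayeredGraph.theta, FreeAlgebra.lift_ι_apply]
    rw [h]
    exact filtV_mono G F hl (prodDiff_mem G F l)
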